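/- For integers n ≥ 0 and 0 ≤ m ≤ n, the number M_{n,m} of strings s ∈ Σ^n such that every initial segment of s contains at least as many l's as r's and the total number of l's exceeds the total number of r's by exactly m satisfies M_{n,m} = Σ_{i ≥ 0, 2i+m ≤ n} ((m+1)/(i+m+1)) · binom(n, 2i+m) · binom(2i+m, i). -/

import Mathlib

/-- The three-letter alphabet `Σ = {0, l, r}` (named `Tri` to avoid a clash with Mathlib). -/
inductive Tri : Type
  | zero : Tri
  | left : Tri
  | right : Tri
  deriving DecidableEq


/-- Ballot numbers: paths of length k from 0 to m staying ≥ 0. -/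
def Bal : ℕ → ℕ → ℕ
  | 0, m => if m = 0 then 1 else 0
  | (k+1), m => Bal k (m+1) + if m = 0 then 0 else Bal k (m-1)

lemma Bal_succ (k m : ℕ) :
    Bal (k+1) m = Bal k (m+1) + if m = 0 then 0 else Bal k (m-1) := rfl

lemma Bal_zero_of_lt {k m : ℕ} (h : k < m) : Bal k m = 0 := by
  induction k generalizing m with
  | zero => simp [Bal]; omega
  | succ k ih =>
    have h1 : Bal k (m+1) = 0 := ih (by omega)
    have h2 : m ≠ 0 := by omega
    have h3 : Bal k (m-1) = 0 := ih (by omega)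
    simp [Bal, h1, h2, h3]

lemma Bal_zero_of_parity {k m : ℕ} (h : (k + m) % 2 = 1) : Bal k m = 0 := by
  induction k generalizing m with
  | zero => simp [Bal]; omega
  | succ k ih =>
    have h1 : Bal k (m+1) = 0 := ih (by omega)
    rcases Nat.eq_zero_or_pos m with hm | hm
    · have h2 : Bal k 1 = 0 := ih (by omega)
      simp [Bal, hm, h2]
    · have h2 : m ≠ 0 := by omega
      have h3 : Bal k (m-1) = 0 := ih (by omega)
      simp [Bal, h1, h2, h3]

lemma Bal_mul (k : ℕ) : ∀ m i : ℕ, k = 2*i + m → Bal k m * (i+m+1) = (m+1) * k.choose i := by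
  induction k with
  | zero => intro m i h
            obtain ⟨rfl, rfl⟩ : i = 0 ∧ m = 0 := by omega
            simp [Bal]
  | succ k ih =>
    intro m i h
    rcases Nat.eq_zero_or_pos m with rfl | hm
    · -- m = 0, i ≥ 1, k = 2(i-1)+1
      have hi : 1 ≤ i := by omega
      have H := ih 1 (i-1) (by omega)
      have hB : Bal (k+1) 0 = Bal k 1 := by simp [Bal]
      have hcs : k.choose i = k.choose (i-1) := by
        rw [← Nat.choose_symm (by omega : i ≤ k)]
        congr 1
        omega
      have hpas : (k+1).choose i = k.choose (i-1) + k.choose i := by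
        rcases Nat.exists_eq_add_of_le hi with ⟨j, rfl⟩
        rw [show 1 + j = j + 1 by omega, Nat.choose_succ_succ]
        simp
      rw [hB, hpas, hcs]
      rw [show i + 0 + 1 = (i-1) + 1 + 1 by omega, H]
      ring
    · -- m ≥ 1
      have hB : Bal (k+1) m = Bal k (m+1) + Bal k (m-1) := by
        have h2 : m ≠ 0 := by omega
        simp [Bal, h2]
      rcases Nat.eq_zero_or_pos i with rfl | hi
      · -- i = 0 : k+1 = m
        have h1 : Bal k (m+1) = 0 := Bal_zero_of_lt (by omega)
        have H := ih (m-1) 0 (by omega)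
        rw [show 0 + (m-1) + 1 = m by omega, Nat.choose_zero_right, Nat.mul_one] at H
        have hBk : Bal k (m-1) = 1 := by
          have : Bal k (m-1) * m = 1 * m := by omega
          exact Nat.eq_of_mul_eq_mul_right hm this
        rw [hB, h1, hBk]
        simp
      · -- i ≥ 1, m ≥ 1
        have H1 := ih (m+1) (i-1) (by omega)
        have H2 := ih (m-1) i (by omega)
        rw [show i - 1 + (m+1) + 1 = i + m + 1 by omega] at H1
        rw [show i + (m-1) + 1 = i + m by omega, show m - 1 + 1 = m by omega] at H2
        have H3 : k.choose i * i = k.choose (i-1) * (i+m) := by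
          have h' := Nat.choose_succ_right_eq k (i-1)
          rw [show i - 1 + 1 = i by omega, show k - (i-1) = i + m by omega] at h'
          exact h'
        have hpas : (k+1).choose i = k.choose (i-1) + k.choose i := by
          rcases Nat.exists_eq_add_of_le hi with ⟨j, rfl⟩
          rw [show 1 + j = j + 1 by omega, Nat.choose_succ_succ]
          simp
        rw [hB, hpas]
        have key : (i+m) * ((Bal k (m+1) + Bal k (m-1)) * (i+m+1)) =
            (i+m) * ((m+1) * (k.choose (i-1) + k.choose i)) := by
          zify at H1 H2 H3 ⊢
          linear_combination (i+m : ℤ) * H1 + (i+m+1 : ℤ) * H2 - H3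
        exact Nat.eq_of_mul_eq_mul_left (by omega) key


def g (n m : ℕ) : ℕ := ∑ k ∈ Finset.range (n+1), n.choose k * Bal k m

lemma g_succ (n m : ℕ) :
    g (n+1) m = g n m + g n (m+1) + if m = 0 then 0 else g n (m-1) := by
  have h1 : g (n+1) m = ∑ k ∈ Finset.range (n+2), (n.choose k + if k = 0 then 0 else n.choose (k-1)) * Bal k m := by
    unfold g
    apply Finset.sum_congr rfl
    intro k hk
    congr 1
    rcases Nat.eq_zero_or_pos k with rfl | hk0
    · simp
    · rcases Nat.exists_eq_add_of_le hk0 with ⟨j, rfl⟩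
      rw [show 1 + j = j + 1 by omega, Nat.choose_succ_succ]
      simp [Nat.add_comm]
  rw [h1]
  have h2 : ∀ k ∈ Finset.range (n+2), (n.choose k + if k = 0 then 0 else n.choose (k-1)) * Bal k m
      = n.choose k * Bal k m + (if k = 0 then 0 else n.choose (k-1) * Bal k m) := by
    intro k _
    rcases Nat.eq_zero_or_pos k with rfl | hk0
    · simp
    · simp [Nat.ne_of_gt hk0, Nat.add_mul]
  rw [Finset.sum_congr rfl h2, Finset.sum_add_distrib]
  have h3 : ∑ k ∈ Finset.range (n+2), n.choose k * Bal k m = g n m := by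
    unfold g
    rw [Finset.sum_range_succ (n := n+1)]
    simp
  have h4 : ∑ k ∈ Finset.range (n+2), (if k = 0 then 0 else n.choose (k-1) * Bal k m)
      = ∑ k ∈ Finset.range (n+1), n.choose k * Bal (k+1) m := by
    rw [Finset.sum_range_succ' (f := fun k => if k = 0 then 0 else n.choose (k-1) * Bal k m)]
    simp
  rw [h3, h4]
  have h5 : ∑ k ∈ Finset.range (n+1), n.choose k * Bal (k+1) m
      = g n (m+1) + if m = 0 then 0 else g n (m-1) := by
    rcases Nat.eq_zero_or_pos m with rfl | hm
    · simp only [if_pos rfl, Nat.add_zero]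
      unfold g
      apply Finset.sum_congr rfl
      intro k _
      rw [Bal_succ]
      simp
    · have hm' : m ≠ 0 := by omega
      simp only [if_neg hm']
      unfold g
      rw [← Finset.sum_add_distrib]
      apply Finset.sum_congr rfl
      intro k _
      rw [Bal_succ]
      simp [hm', Nat.mul_add]
  rw [h5]
  omega



instance : Fintype Tri :=
  ⟨{Tri.zero, Tri.left, Tri.right}, by intro x; cases x <;> simp⟩

def S (n m : ℕ) : Set (List Tri) :=
  {s : List Tri | s.length = n ∧
    (∀ j : ℕ, (s.take j).count Tri.right ≤ (s.take j).count Tri.left) ∧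
    (s.count Tri.left : ℤ) - (s.count Tri.right : ℤ) = (m : ℤ)}

lemma S_finite (n m : ℕ) : (S n m).Finite :=
  (List.finite_length_eq Tri n).subset (fun s hs => hs.1)

lemma count_concat (t : List Tri) (c a : Tri) :
    (t ++ [c]).count a = t.count a + if c = a then 1 else 0 := by
  rw [List.count_append]
  congr 1
  rcases c <;> rcases a <;> simp [List.count_cons]

lemma pref_concat {t : List Tri} {c : Tri}
    (h : ∀ j : ℕ, (t.take j).count Tri.right ≤ (t.take j).count Tri.left)
    (hw : (t ++ [c]).count Tri.right ≤ (t ++ [c]).count Tri.left) :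
    ∀ j : ℕ, ((t ++ [c]).take j).count Tri.right ≤ ((t ++ [c]).take j).count Tri.left := by
  intro j
  rcases le_or_gt j t.length with hj | hj
  · rw [List.take_append_of_le_length hj]
    exact h j
  · rw [List.take_of_length_le (by simpa using hj)]
    exact hw

lemma pref_take {s : List Tri}
    (h : ∀ j : ℕ, (s.take j).count Tri.right ≤ (s.take j).count Tri.left) (n : ℕ) :
    ∀ j : ℕ, ((s.take n).take j).count Tri.right ≤ ((s.take n).take j).count Tri.left := by
  intro j
  rw [List.take_take]
  exact h _

lemma concat_mem_S {t : List Tri} {n m' : ℕ} (ht : t ∈ S n m') (c : Tri) (m : ℕ)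
    (hd : ((t ++ [c]).count Tri.left : ℤ) - ((t ++ [c]).count Tri.right : ℤ) = (m : ℤ)) :
    t ++ [c] ∈ S (n+1) m := by
  obtain ⟨hl, hp, _⟩ := ht
  refine ⟨by simp [hl], ?_, hd⟩
  apply pref_concat hp
  have : ((t ++ [c]).count Tri.right : ℤ) ≤ ((t ++ [c]).count Tri.left : ℤ) := by omega
  exact_mod_cast this

lemma S_decomp (n m : ℕ) :
    S (n+1) m = (fun t => t ++ [Tri.zero]) '' S n m ∪
      (fun t => t ++ [Tri.right]) '' S n (m+1) ∪
      (if m = 0 then ∅ else (fun t => t ++ [Tri.left]) '' S n (m-1)) := by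
  ext s
  constructor
  · rintro ⟨hl, hp, hd⟩
    have hne : s ≠ [] := by intro h; rw [h] at hl; simp at hl
    set c := s.getLast hne with hc
    set t := s.dropLast with hts
    have hst : t ++ [c] = s := List.dropLast_append_getLast hne
    have htl : t.length = n := by
      have := congrArg List.length hst
      simp at this
      omega
    have htt : t = s.take n := by
      rw [← hst]
      rw [List.take_append_of_le_length (by omega), List.take_of_length_le (by omega)]
    have hpt : ∀ j : ℕ, ((t.take j)).count Tri.right ≤ ((t.take j)).count Tri.left := by
      rw [htt]; exact pref_take hp n
    have hcl := count_concat t c Tri.left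
    have hcr := count_concat t c Tri.right
    rw [hst] at hcl hcr
    have hdt : (t.count Tri.right : ℤ) ≤ (t.count Tri.left : ℤ) := by
      have := hpt n
      rw [List.take_of_length_le (by omega)] at this
      exact_mod_cast this
    rcases c with _ | _ | _
    · left; left
      refine ⟨t, ⟨htl, hpt, ?_⟩, hst⟩
      simp at hcl hcr
      omega
    · -- left
      have hm : m ≠ 0 := by
        simp at hcl hcr
        omega
      right
      rw [if_neg hm]
      refine ⟨t, ⟨htl, hpt, ?_⟩, hst⟩
      simp at hcl hcr
      have : ((m-1 : ℕ) : ℤ) = (m : ℤ) - 1 := by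
        have : 1 ≤ m := by omega
        push_cast [this]
        ring
      omega
    · left; right
      refine ⟨t, ⟨htl, hpt, ?_⟩, hst⟩
      simp at hcl hcr
      push_cast
      omega
  · intro hs
    rcases hs with (⟨t, ht, rfl⟩ | ⟨t, ht, rfl⟩) | hs
    · apply concat_mem_S ht
      have := ht.2.2
      rw [count_concat, count_concat]
      simp only [reduceCtorEq, if_false]
      push_cast
      omega
    · apply concat_mem_S ht
      have := ht.2.2
      rw [count_concat, count_concat]
      simp only [reduceCtorEq, if_false, if_true]
      push_cast at this ⊢
      omega
    · rcases eq_or_ne m 0 with rfl | hm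
      · rw [if_pos rfl] at hs; exact absurd hs (by simp)
      · rw [if_neg hm] at hs
        obtain ⟨t, ht, rfl⟩ := hs
        apply concat_mem_S ht
        have := ht.2.2
        have h1 : ((m-1 : ℕ) : ℤ) = (m : ℤ) - 1 := by
          have : 1 ≤ m := by omega
          push_cast [this]
          ring
        rw [count_concat, count_concat]
        simp only [reduceCtorEq, if_false, if_true]
        push_cast
        omega

lemma disj_concat (X Y : Set (List Tri)) {c d : Tri} (h : c ≠ d) :
    Disjoint ((fun t => t ++ [c]) '' X) ((fun t => t ++ [d]) '' Y) := by
  rw [Set.disjoint_left]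
  rintro x ⟨t, _, rfl⟩ ⟨u, _, he⟩
  have := congrArg List.getLast? he
  simp at this
  exact h this.symm

lemma ncard_concat_image (X : Set (List Tri)) (c : Tri) :
    ((fun t => t ++ [c]) '' X).ncard = X.ncard :=
  Set.ncard_image_of_injective X (List.append_left_injective [c])

lemma S_ncard_succ (n m : ℕ) :
    (S (n+1) m).ncard = (S n m).ncard + (S n (m+1)).ncard +
      if m = 0 then 0 else (S n (m-1)).ncard := by
  have fin : ∀ (Y : Set (List Tri)) (c : Tri) (k m' : ℕ), Y = S k m' →
      ((fun t => t ++ [c]) '' Y).Finite := by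
    rintro Y c k m' rfl
    exact (S_finite k m').image _
  rw [S_decomp]
  rcases eq_or_ne m 0 with rfl | hm
  · rw [if_pos rfl, if_pos rfl, Set.union_empty,
      Set.ncard_union_eq (disj_concat _ _ (by simp)) (fin _ _ n 0 rfl) (fin _ _ n 1 rfl),
      ncard_concat_image, ncard_concat_image]
    norm_num
  · rw [if_neg hm, if_neg hm]
    rw [Set.ncard_union_eq ?dj
        ((fin _ _ n m rfl).union (fin _ _ n (m+1) rfl)) (fin _ _ n (m-1) rfl),
      Set.ncard_union_eq (disj_concat _ _ (by simp)) (fin _ _ n m rfl) (fin _ _ n (m+1) rfl),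
      ncard_concat_image, ncard_concat_image, ncard_concat_image]
    case dj =>
      exact Set.disjoint_union_left.mpr
        ⟨disj_concat _ _ (by simp), disj_concat _ _ (by simp)⟩

lemma S_ncard_zero (m : ℕ) : (S 0 m).ncard = if m = 0 then 1 else 0 := by
  rcases eq_or_ne m 0 with rfl | hm
  · rw [if_pos rfl]
    have : S 0 0 = {([] : List Tri)} := by
      ext s
      simp only [S, Set.mem_setOf_eq, Set.mem_singleton_iff]
      constructor
      · rintro ⟨h, -, -⟩
        exact List.length_eq_zero_iff.mp h
      · rintro rfl
        refine ⟨rfl, by simp, by simp⟩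
    rw [this, Set.ncard_singleton]
  · rw [if_neg hm]
    have : S 0 m = ∅ := by
      ext s
      simp only [S, Set.mem_setOf_eq, Set.mem_empty_iff_false, iff_false]
      rintro ⟨h, -, hd⟩
      rw [List.length_eq_zero_iff.mp h] at hd
      simp at hd
      omega
    rw [this]
    simp


lemma S_card (n : ℕ) : ∀ m, (S n m).ncard = g n m := by
  induction n with
  | zero =>
    intro m
    rw [S_ncard_zero]
    simp [g, Bal]
  | succ n ih =>
    intro m
    rw [S_ncard_succ, g_succ, ih, ih]
    rcases eq_or_ne m 0 with rfl | hm
    · simp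
    · simp [hm, ih]

lemma g_eq (n m : ℕ) : g n m =
    ∑ i ∈ (Finset.range (n+1)).filter (fun i => 2*i+m ≤ n),
      n.choose (2*i+m) * Bal (2*i+m) m := by
  unfold g
  rw [← Finset.sum_filter_of_ne
    (p := fun k => m ≤ k ∧ (k - m) % 2 = 0) ?h]
  case h =>
    intro k hk hne
    by_contra hc
    push_neg at hc
    apply hne
    rcases Nat.lt_or_ge k m with h' | h'
    · rw [Bal_zero_of_lt h']; ring
    · have hp : (k + m) % 2 = 1 := by
        have := hc h'
        omega
      rw [Bal_zero_of_parity hp]; ring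
  refine Finset.sum_nbij' (i := fun k => (k - m)/2) (j := fun i => 2*i+m) ?_ ?_ ?_ ?_ ?_
  · intro k hk
    simp only [Finset.mem_filter, Finset.mem_range] at hk ⊢
    omega
  · intro i hi
    simp only [Finset.mem_filter, Finset.mem_range] at hi ⊢
    omega
  · intro k hk
    simp only [Finset.mem_filter, Finset.mem_range] at hk
    omega
  · intro i hi
    simp only [Finset.mem_filter, Finset.mem_range] at hi
    omega
  · intro k hk
    simp only [Finset.mem_filter, Finset.mem_range] at hk
    have : 2 * ((k - m)/2) + m = k := by omega
    rw [this]

theorem stmt4 (n m : ℕ) (hm : m ≤ n) :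
    (Set.ncard {s : List Tri | s.length = n ∧
        (∀ j : ℕ, (s.take j).count Tri.right ≤ (s.take j).count Tri.left) ∧
        (s.count Tri.left : ℤ) - (s.count Tri.right : ℤ) = (m : ℤ)} : ℚ) =
      ∑ i ∈ (Finset.range (n + 1)).filter (fun i => 2 * i + m ≤ n),
        ((m : ℚ) + 1) / ((i : ℚ) + (m : ℚ) + 1) * (n.choose (2 * i + m) : ℚ) *
          ((2 * i + m).choose i : ℚ) := by
  have hset : {s : List Tri | s.length = n ∧
        (∀ j : ℕ, (s.take j).count Tri.right ≤ (s.take j).count Tri.left) ∧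
        (s.count Tri.left : ℤ) - (s.count Tri.right : ℤ) = (m : ℤ)} = S n m := rfl
  rw [hset, S_card, g_eq]
  push_cast
  apply Finset.sum_congr rfl
  intro i hi
  have hb := Bal_mul (2*i+m) m i rfl
  have hq : (Bal (2*i+m) m : ℚ) * ((i : ℚ) + m + 1) = ((m : ℚ)+1) * ((2*i+m).choose i : ℚ) := by
    exact_mod_cast hb
  have hne : (i : ℚ) + m + 1 ≠ 0 := by positivity
  field_simp
  linear_combination ((n.choose (2*i+m) : ℚ)) * hq
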